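/- arXiv:2211.02794 — 4 statements merged into one kernel-verified Lean document; each statement's English description precedes it below -/
import Mathlib

section
/- Given a finite Boolean signal z : {0,…,H} → Bool, define counters by reverse recursion: c¹(H) = 0, c²(H) = 0, c¹(t) = (c¹(t+1) + 1) if z(t) = true else 0, and c²(t) = (c¹(t+1) + c²(t+1)) if z(t) = false else 0. Then for all t ≤ H, c¹(t) + c²(t) equals t_dur(t), where t_dur(t) is defined as: let t' = t + t_rec(t), with t_rec(t) = min({d | t+d ≤ H ∧ z(t+d) = true} ∪ {H−t}); then t_dur(t) = min({d | t'+d ≤ H ∧ z(t'+d) = false} ∪ {H−t'}). -/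
/-- Time to recovery at time `t`: first `d` with `z (t+d) = true`, or `H - t`. -/
noncomputable def tRec (H : ℕ) (z : ℕ → Bool) (t : ℕ) : ℕ :=
  sInf ({d : ℕ | t + d ≤ H ∧ z (t + d) = true} ∪ {H - t})

/-- Durability at time `t`: time from recovery `t' = t + tRec` until the first
    violation at or after `t'`, or `H - t'` if none. -/
noncomputable def tDur (H : ℕ) (z : ℕ → Bool) (t : ℕ) : ℕ :=
  sInf ({d : ℕ | (t + tRec H z t) + d ≤ H ∧ z ((t + tRec H z t) + d) = false} ∪
        {H - (t + tRec H z t)})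

/-- Time to violation at time `t`. -/
noncomputable def tVio (H : ℕ) (z : ℕ → Bool) (t : ℕ) : ℕ :=
  sInf ({d : ℕ | t + d ≤ H ∧ z (t + d) = false} ∪ {H - t})

lemma sInf_image_succ (T : Set ℕ) (hT : T.Nonempty) :
    sInf ((· + 1) '' T) = sInf T + 1 := by
  apply le_antisymm
  · exact Nat.sInf_le ⟨sInf T, Nat.sInf_mem hT, rfl⟩
  · obtain ⟨e, he, hee⟩ := Nat.sInf_mem (hT.image (· + 1))
    simp only at hee
    rw [← hee]
    exact Nat.succ_le_succ (Nat.sInf_le he)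

lemma set_shift (H t : ℕ) (p : ℕ → Prop) (ht : t < H) (hp : ¬ p t) :
    ({d : ℕ | t + d ≤ H ∧ p (t + d)} ∪ {H - t}) =
    (· + 1) '' ({d : ℕ | (t + 1) + d ≤ H ∧ p ((t + 1) + d)} ∪ {H - (t + 1)}) := by
  ext d
  simp only [Set.mem_union, Set.mem_setOf_eq, Set.mem_singleton_iff, Set.mem_image]
  constructor
  · rintro (⟨hd, hpd⟩ | hd)
    · cases d with
      | zero => exact absurd (by simpa using hpd) hp
      | succ e =>
          exact ⟨e, Or.inl ⟨by omega, by rw [show (t+1)+e = t+(e+1) by ring]; exact hpd⟩, rfl⟩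
    · exact ⟨H - (t + 1), Or.inr rfl, by omega⟩
  · rintro ⟨e, (⟨he, hpe⟩ | he), rfl⟩
    · exact Or.inl ⟨by omega, by rw [show t+(e+1) = (t+1)+e by ring]; exact hpe⟩
    · right; omega

lemma set_nonempty (H t : ℕ) (p : ℕ → Prop) :
    Set.Nonempty ({d : ℕ | t + d ≤ H ∧ p (t + d)} ∪ {H - t}) :=
  ⟨H - t, Or.inr rfl⟩

lemma tVio_H (H : ℕ) (z : ℕ → Bool) : tVio H z H = 0 := by
  apply Nat.sInf_eq_zero.mpr
  left; right; simp

lemma tVio_succ (H : ℕ) (z : ℕ → Bool) (t : ℕ) (ht : t < H) (hz : z t = true) :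
    tVio H z t = tVio H z (t + 1) + 1 := by
  unfold tVio
  rw [set_shift H t (fun n => z n = false) ht (by simp [hz])]
  exact sInf_image_succ _ ⟨H - (t + 1), Or.inr rfl⟩

lemma tVio_zero (H : ℕ) (z : ℕ → Bool) (t : ℕ) (ht : t ≤ H) (hz : z t = false) :
    tVio H z t = 0 := by
  apply Nat.sInf_eq_zero.mpr
  left; left
  exact ⟨by omega, by simpa using hz⟩

lemma tRec_true (H : ℕ) (z : ℕ → Bool) (t : ℕ) (ht : t ≤ H) (hz : z t = true) :
    tRec H z t = 0 := by
  apply Nat.sInf_eq_zero.mpr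
  left; left
  exact ⟨by omega, by simpa using hz⟩

lemma tRec_H (H : ℕ) (z : ℕ → Bool) : tRec H z H = 0 := by
  apply Nat.sInf_eq_zero.mpr
  left; right; simp

lemma tRec_succ (H : ℕ) (z : ℕ → Bool) (t : ℕ) (ht : t < H) (hz : z t = false) :
    tRec H z t = tRec H z (t + 1) + 1 := by
  unfold tRec
  rw [set_shift H t (fun n => z n = true) ht (by simp [hz])]
  exact sInf_image_succ _ ⟨H - (t + 1), Or.inr rfl⟩

lemma tDur_eq_tVio (H : ℕ) (z : ℕ → Bool) (t : ℕ) (ht : tRec H z t = 0) :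
    tDur H z t = tVio H z t := by
  unfold tDur tVio
  rw [ht]
  simp

lemma c1_eq_tVio (H : ℕ) (z : ℕ → Bool) (c1 : ℕ → ℕ)
    (h1H : c1 H = 0) (h1 : ∀ t < H, c1 t = if z t then c1 (t + 1) + 1 else 0) :
    ∀ t ≤ H, c1 t = tVio H z t := by
  have key : ∀ n t, t ≤ H → H - t = n → c1 t = tVio H z t := by
    intro n
    induction n with
    | zero =>
        intro t ht h0
        have : t = H := by omega
        subst this
        rw [h1H, tVio_H]
    | succ n ih =>
        intro t ht hn
        have htH : t < H := by omega
        rw [h1 t htH]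
        cases hz : z t with
        | false => rw [tVio_zero H z t ht hz, if_neg (by simp [hz])]
        | true =>
            rw [if_pos rfl, tVio_succ H z t htH hz, ih (t+1) (by omega) (by omega)]
  intro t ht
  exact key (H - t) t ht rfl

theorem dur_counters_correct (H : ℕ) (z : ℕ → Bool) (c1 c2 : ℕ → ℕ)
    (h1H : c1 H = 0) (h2H : c2 H = 0)
    (h1 : ∀ t < H, c1 t = if z t then c1 (t + 1) + 1 else 0)
    (h2 : ∀ t < H, c2 t = if z t then 0 else c1 (t + 1) + c2 (t + 1)) :
    ∀ t ≤ H, c1 t + c2 t = tDur H z t := by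
  have hc1 := c1_eq_tVio H z c1 h1H h1
  have key : ∀ n t, t ≤ H → H - t = n → c1 t + c2 t = tDur H z t := by
    intro n
    induction n with
    | zero =>
        intro t ht h0
        have : t = H := by omega
        subst this
        rw [h1H, h2H, tDur_eq_tVio _ z _ (tRec_H _ z), tVio_H]
    | succ n ih =>
        intro t ht hn
        have htH : t < H := by omega
        cases hz : z t with
        | true =>
            rw [h2 t htH, if_pos hz,
              tDur_eq_tVio H z t (tRec_true H z t ht hz), ← hc1 t ht, add_zero]
        | false =>
            have hshift : t + tRec H z t = (t + 1) + tRec H z (t + 1) := by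
              rw [tRec_succ H z t htH hz]; ring
            have : tDur H z t = tDur H z (t + 1) := by
              unfold tDur
              rw [hshift]
            rw [this, h1 t htH, if_neg (by simp [hz]), h2 t htH, if_neg (by simp [hz])]
            rw [zero_add]
            exact ih (t + 1) (by omega) (by omega)
  intro t ht
  exact key (H - t) t ht rfl
end

section
/- For discrete-time signals ξ and time bounds a ≤ b in ℕ, the bounded until formula φ₁ U_{[a,b]} φ₂ is semantically equivalent to G_{[0,a−1]} φ₁ ∧ F_{[a,b]} φ₂ ∧ F_{[a,a]}(φ₁ U φ₂), where U without subscript is the unbounded until: (ξ,t) ⊨ φ₁ U φ₂ iff there exists t' ≥ t with (ξ,t') ⊨ φ₂ and (ξ,t'') ⊨ φ₁ for all t'' ∈ [t, t'). -/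
/-- Bounded until over discrete time ℕ (satisfaction signals of the
    subformulas given as predicates on time). -/
def UntilI (φ₁ φ₂ : ℕ → Prop) (a b t : ℕ) : Prop :=
  ∃ t', t + a ≤ t' ∧ t' ≤ t + b ∧ φ₂ t' ∧ ∀ t'', t ≤ t'' → t'' < t' → φ₁ t''

/-- Unbounded until over discrete time ℕ. -/
def UntilU (φ₁ φ₂ : ℕ → Prop) (t : ℕ) : Prop :=
  ∃ t', t ≤ t' ∧ φ₂ t' ∧ ∀ t'', t ≤ t'' → t'' < t' → φ₁ t''

theorem until_decomposition (φ₁ φ₂ : ℕ → Prop) (a b t : ℕ) (hab : a ≤ b) :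
    UntilI φ₁ φ₂ a b t ↔
      ((∀ t', t ≤ t' → t' < t + a → φ₁ t') ∧
       (∃ t', t + a ≤ t' ∧ t' ≤ t + b ∧ φ₂ t') ∧
       UntilU φ₁ φ₂ (t + a)) := by
  constructor
  · rintro ⟨t', h1, h2, h3, h4⟩
    refine ⟨fun s hs hs' => h4 s hs (lt_of_lt_of_le hs' h1), ⟨t', h1, h2, h3⟩,
      t', h1, h3, fun s hs hs' => h4 s (le_trans (Nat.le_add_right t a) hs) hs'⟩
  · rintro ⟨hG, ⟨s, hs1, hs2, hs3⟩, u, hu1, hu2, hu3⟩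
    by_cases hub : u ≤ t + b
    · exact ⟨u, hu1, hub, hu2, fun r hr hr' => by
        rcases lt_or_ge r (t + a) with h | h
        · exact hG r hr h
        · exact hu3 r h hr'⟩
    · push_neg at hub
      exact ⟨s, hs1, hs2, hs3, fun r hr hr' => by
        rcases lt_or_ge r (t + a) with h | h
        · exact hG r hr h
        · exact hu3 r h (lt_trans hr' (lt_of_le_of_lt hs2 hub))⟩
end

section
/- Soundness of the resilience semantics for SRS atoms: let z : {0,…,H} → Bool be a Boolean satisfaction signal, α, β ∈ ℕ with β > 0. Define t_rec = min({d | z(d) = true} ∪ {H}) and, with t' = t_rec, t_dur = min({d | t'+d ≤ H ∧ z(t'+d) = false} ∪ {H − t'}). If α − t_rec ≥ 0 and t_dur − β ≥ 0 with at least one inequality strict, and t' + t_dur ≤ H, then the SRS atom ¬φ U_{[0,α]} G_{[0,β)} φ is satisfied at time 0, i.e., there exists t' ∈ [0,α] with z true on [t', t'+β) and z false on [0,t'). -/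
theorem srs_soundness (H α β : ℕ) (hβ : 0 < β) (z : ℕ → Bool)
    (trec tdur : ℕ)
    (hrec : trec = sInf ({d : ℕ | z d = true} ∪ {H}))
    (hdur : tdur = sInf ({d : ℕ | trec + d ≤ H ∧ z (trec + d) = false} ∪ {H - trec}))
    (h1 : trec ≤ α) (h2 : β ≤ tdur) (hstrict : trec < α ∨ β < tdur)
    (hend : trec + tdur ≤ H) :
    ∃ t', t' ≤ α ∧ (∀ s, t' ≤ s → s < t' + β → z s = true) ∧
      (∀ s, s < t' → z s = false) := by
  refine ⟨trec, h1, ?_, ?_⟩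
  · intro s hs hs'
    have hsH : s ≤ H := by omega
    have hlt : s - trec < tdur := by omega
    have hnot : s - trec ∉ ({d : ℕ | trec + d ≤ H ∧ z (trec + d) = false} ∪ {H - trec}) := by
      intro hmem
      have := Nat.sInf_le hmem
      omega
    simp only [Set.mem_union, Set.mem_setOf_eq, Set.mem_singleton_iff, not_or] at hnot
    have h3 : trec + (s - trec) = s := by omega
    rw [h3] at hnot
    have := hnot.1
    by_contra hf
    exact this ⟨hsH, by simpa using hf⟩
  · intro s hs
    have hnot : s ∉ ({d : ℕ | z d = true} ∪ {H}) := by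
      intro hmem
      have := Nat.sInf_le hmem
      omega
    simp only [Set.mem_union, Set.mem_setOf_eq, Set.mem_singleton_iff, not_or] at hnot
    simpa using hnot.1
end

section
/- ε-constraint Pareto enumeration correctness for finite bi-objective sets: let P ⊆ ℤ² be a nonempty finite set of attainable objective pairs (f,g). Consider the sequence generated by: ε₀ = min over P of first coordinates; at each step, among points of P with first coordinate ≥ ε_k, pick one maximizing the second coordinate and, among those, maximizing the first coordinate, obtaining (f_k, g_k); set ε_{k+1} = f_k + 1; stop when no point of P has first coordinate ≥ ε_k. Then the collected set S = {(f_k, g_k)} contains all Pareto-optimal points of P under ≻, i.e., max_≻(P) ⊆ S. -/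
def ParetoDom (x y : ℤ × ℤ) : Prop :=
  y.1 ≤ x.1 ∧ y.2 ≤ x.2 ∧ (y.1 < x.1 ∨ y.2 < x.2)

/-- ε-constraint enumeration: the collected points contain the whole Pareto front.
`E k` is the threshold at step `k`, `(F k, G k)` the point collected at step `k`
(maximizing the second coordinate over the feasible set `{x ∈ P | E k ≤ x.1}`,
breaking ties by maximal first coordinate), with `E (k+1) = F k + 1`; the
procedure runs for `K` steps, stopping when no feasible point remains. -/
theorem eps_constraint_covers_pareto_front (P : Finset (ℤ × ℤ)) (hP : P.Nonempty)
    (K : ℕ) (E F G : ℕ → ℤ)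
    (hE0 : IsLeast {v : ℤ | ∃ p ∈ P, p.1 = v} (E 0))
    (hmem : ∀ k < K, (F k, G k) ∈ P)
    (hfeas : ∀ k < K, E k ≤ F k)
    (hGmax : ∀ k < K, ∀ q ∈ P, E k ≤ q.1 → q.2 ≤ G k)
    (hFmax : ∀ k < K, ∀ q ∈ P, E k ≤ q.1 → q.2 = G k → q.1 ≤ F k)
    (hstep : ∀ k < K, E (k + 1) = F k + 1)
    (hstop : ∀ q ∈ P, q.1 < E K) :
    ∀ x ∈ P, (∀ y ∈ P, ¬ ParetoDom y x) → ∃ k < K, x = (F k, G k) := by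
  intro x hx hnd
  have hpK : x.1 < E K := hstop x hx
  have hp0 : E 0 ≤ x.1 := hE0.2 ⟨x, hx, rfl⟩
  classical
  have hex : ∃ n, x.1 < E n := ⟨K, hpK⟩
  set n := Nat.find hex with hn
  have hspec : x.1 < E n := Nat.find_spec hex
  have hnK : n ≤ K := Nat.find_le hpK
  have hnpos : 0 < n := by
    by_contra h
    have : n = 0 := by omega
    rw [this] at hspec; omega
  obtain ⟨k, hkn⟩ : ∃ k, n = k + 1 := ⟨n - 1, by omega⟩
  rw [hkn] at hspec
  have hkK : k < K := by omega
  have hEk : E k ≤ x.1 := le_of_not_gt (Nat.find_min hex (by omega))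
  have hxF : x.1 ≤ F k := by
    have := hstep k hkK
    omega
  have hxG : x.2 ≤ G k := hGmax k hkK x hx hEk
  have hndk := hnd (F k, G k) (hmem k hkK)
  unfold ParetoDom at hndk
  simp only [not_and_or, not_or, not_lt] at hndk
  have h1 : x.1 = F k := by
    rcases hndk with h | h | h
    · omega
    · omega
    · omega
  have h2 : x.2 = G k := by
    rcases hndk with h | h | h <;> omega
  exact ⟨k, hkK, Prod.ext h1 h2⟩
end
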